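/- arXiv:2511.21638 — 4 statements merged into one kernel-verified Lean document; each statement's English description precedes it below -/
import Mathlib

section
/- Let (S, A, P, r, γ) be a finite Markov decision process with discount factor γ ∈ [0,1), and let π and π' be stationary policies. Suppose that π' produces a single-step improvement over π from every state s, in the sense that E_{a∼π'(·|s)}[Q^π(s,a)] ≥ E_{a∼π(·|s)}[Q^π(s,a)] for all s ∈ S. Then π' is globally at least as good as π: V^{π'}(s₀) ≥ V^π(s₀) for every initial state s₀ ∈ S. -/
open scoped BigOperators

/-- A finite Markov decision process over state space `S` and action space `A`. -/
structure MDP (S A : Type) [Fintype S] [Fintype A] where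
  /-- transition kernel: `P s a s'` is the probability of moving to `s'` from `s` under action `a` -/
  P : S → A → S → ℝ
  P_nonneg : ∀ s a s', 0 ≤ P s a s'
  P_sum_one : ∀ s a, ∑ s', P s a s' = 1
  /-- reward function -/
  r : S → A → ℝ
  /-- discount factor -/
  γ : ℝ
  γ_nonneg : 0 ≤ γ
  γ_lt_one : γ < 1

variable {S A : Type} [Fintype S] [Fintype A] [DecidableEq S]

/-- `p` is a probability distribution on a finite set. -/
def IsProb {A : Type} [Fintype A] (p : A → ℝ) : Prop :=
  (∀ a, 0 ≤ p a) ∧ ∑ a, p a = 1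

/-- A stationary policy assigns a probability distribution over actions to each state. -/
def IsPolicy (π : S → A → ℝ) : Prop :=
  ∀ s, IsProb (π s)

/-- Distribution of the state at time `t`, starting at `s₀` and following policy `π`. -/
noncomputable def stateDist (M : MDP S A) (π : S → A → ℝ) (s₀ : S) : ℕ → S → ℝ
  | 0, s => if s = s₀ then 1 else 0
  | t + 1, s' => ∑ s, ∑ a, stateDist M π s₀ t s * π s a * M.P s a s'

/-- Value function: expected discounted return of policy `π` started from `s₀`. -/
noncomputable def V (M : MDP S A) (π : S → A → ℝ) (s₀ : S) : ℝ :=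
  ∑' t : ℕ, M.γ ^ t * ∑ s, stateDist M π s₀ t s * ∑ a, π s a * M.r s a

/-- State-action value function of policy `π`. -/
noncomputable def Q (M : MDP S A) (π : S → A → ℝ) (s : S) (a : A) : ℝ :=
  M.r s a + M.γ * ∑ s', M.P s a s' * V M π s'

/-- Advantage function of policy `π`. -/
noncomputable def Adv (M : MDP S A) (π : S → A → ℝ) (s : S) (a : A) : ℝ :=
  Q M π s a - V M π s

/-- Discounted state visitation distribution of policy `π` started from `s₀`. -/
noncomputable def dvisit (M : MDP S A) (π : S → A → ℝ) (s₀ : S) (s : S) : ℝ :=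
  (1 - M.γ) * ∑' t : ℕ, M.γ ^ t * stateDist M π s₀ t s

/-- Kullback–Leibler divergence between distributions on a finite set. -/
noncomputable def KL {A : Type} [Fintype A] (p q : A → ℝ) : ℝ :=
  ∑ a, p a * Real.log (p a / q a)

/-- `p` is absolutely continuous with respect to `q`. -/
def AbsCont {A : Type} [Fintype A] (p q : A → ℝ) : Prop :=
  ∀ a, q a = 0 → p a = 0


section Aux

variable {S A : Type} [Fintype S] [Fintype A] [DecidableEq S]

lemma stateDist_nonneg (M : MDP S A) (π : S → A → ℝ) (hπ : IsPolicy π) (s₀ : S) :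
    ∀ t s, 0 ≤ stateDist M π s₀ t s := by
  intro t
  induction t with
  | zero => intro s; simp only [stateDist]; split <;> norm_num
  | succ t ih =>
    intro s'
    apply Finset.sum_nonneg; intro s _
    apply Finset.sum_nonneg; intro a _
    exact mul_nonneg (mul_nonneg (ih s) ((hπ s).1 a)) (M.P_nonneg s a s')

lemma stateDist_sum_one (M : MDP S A) (π : S → A → ℝ) (hπ : IsPolicy π) (s₀ : S) :
    ∀ t, ∑ s, stateDist M π s₀ t s = 1 := by
  intro t
  induction t with
  | zero => simp [stateDist]
  | succ t ih =>
    simp only [stateDist]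
    rw [Finset.sum_comm]
    have : ∀ s ∈ Finset.univ (α := S),
        (∑ s' : S, ∑ a, stateDist M π s₀ t s * π s a * M.P s a s')
          = stateDist M π s₀ t s := by
      intro s _
      rw [Finset.sum_comm]
      have : ∀ a ∈ Finset.univ (α := A),
          (∑ s' : S, stateDist M π s₀ t s * π s a * M.P s a s')
            = stateDist M π s₀ t s * π s a := by
        intro a _
        rw [← Finset.mul_sum, M.P_sum_one, mul_one]
      rw [Finset.sum_congr rfl this, ← Finset.mul_sum, (hπ s).2, mul_one]
    rw [Finset.sum_congr rfl this, ih]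

lemma stateDist_le_one (M : MDP S A) (π : S → A → ℝ) (hπ : IsPolicy π) (s₀ : S)
    (t : ℕ) (s : S) : stateDist M π s₀ t s ≤ 1 := by
  have h := stateDist_sum_one M π hπ s₀ t
  calc stateDist M π s₀ t s ≤ ∑ s', stateDist M π s₀ t s' :=
        Finset.single_le_sum (fun s' _ => stateDist_nonneg M π hπ s₀ t s') (Finset.mem_univ s)
    _ = 1 := h

lemma stateDist_succ_eq (M : MDP S A) (π : S → A → ℝ) (s₀ : S) :
    ∀ t s, stateDist M π s₀ (t + 1) s
      = ∑ s₁, (∑ a, π s₀ a * M.P s₀ a s₁) * stateDist M π s₁ t s := by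
  intro t
  induction t with
  | zero =>
    intro s
    simp only [stateDist]
    rw [Finset.sum_comm]
    simp [Finset.sum_ite_eq, Finset.mul_sum, Finset.sum_mul, mul_comm]
  | succ t ih =>
    intro s
    show (∑ s₂, ∑ a, stateDist M π s₀ (t+1) s₂ * π s₂ a * M.P s₂ a s) = _
    have h1 : ∀ s₂ ∈ Finset.univ (α := S), (∑ a, stateDist M π s₀ (t+1) s₂ * π s₂ a * M.P s₂ a s)
        = ∑ a, (∑ s₁, (∑ a', π s₀ a' * M.P s₀ a' s₁) * stateDist M π s₁ t s₂) * π s₂ a * M.P s₂ a s := by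
      intro s₂ _
      rw [ih s₂]
    rw [Finset.sum_congr rfl h1]
    have h2 : ∀ s₁ ∈ Finset.univ (α := S),
        (∑ a, π s₀ a * M.P s₀ a s₁) * stateDist M π s₁ (t+1) s
        = ∑ s₂, ∑ a, (∑ a', π s₀ a' * M.P s₀ a' s₁) * (stateDist M π s₁ t s₂ * π s₂ a * M.P s₂ a s) := by
      intro s₁ _
      show _ = ∑ s₂, ∑ a, (∑ a', π s₀ a' * M.P s₀ a' s₁) * (stateDist M π s₁ t s₂ * π s₂ a * M.P s₂ a s)
      rw [show stateDist M π s₁ (t+1) s = ∑ s₂, ∑ a, stateDist M π s₁ t s₂ * π s₂ a * M.P s₂ a s from rfl,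
        Finset.mul_sum]
      congr 1; funext s₂; rw [Finset.mul_sum]
    rw [Finset.sum_congr rfl h2]
    rw [show (∑ s₂, ∑ a, (∑ s₁, (∑ a', π s₀ a' * M.P s₀ a' s₁) * stateDist M π s₁ t s₂) * π s₂ a * M.P s₂ a s)
        = ∑ s₂, ∑ s₁, ∑ a, (∑ a', π s₀ a' * M.P s₀ a' s₁) * (stateDist M π s₁ t s₂ * π s₂ a * M.P s₂ a s) from ?_]
    · exact Finset.sum_comm
    · refine Finset.sum_congr rfl fun s₂ _ => ?_
      rw [show (∑ a, (∑ s₁, (∑ a', π s₀ a' * M.P s₀ a' s₁) * stateDist M π s₁ t s₂) * π s₂ a * M.P s₂ a s)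
          = ∑ a, ∑ s₁, (∑ a', π s₀ a' * M.P s₀ a' s₁) * (stateDist M π s₁ t s₂ * π s₂ a * M.P s₂ a s) from ?_]
      · exact Finset.sum_comm
      · refine Finset.sum_congr rfl fun a _ => ?_
        rw [Finset.sum_mul, Finset.sum_mul]
        refine Finset.sum_congr rfl fun s₁ _ => ?_
        ring

lemma summable_V (M : MDP S A) (π : S → A → ℝ) (hπ : IsPolicy π) (c : S → ℝ) (s₀ : S) :
    Summable (fun t : ℕ => M.γ ^ t * ∑ s, stateDist M π s₀ t s * c s) := by
  apply Summable.of_norm_bounded (g := fun t : ℕ => M.γ ^ t * ∑ s, |c s|)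
  · exact (summable_geometric_of_lt_one M.γ_nonneg M.γ_lt_one).mul_right _
  · intro t
    rw [Real.norm_eq_abs, abs_mul, abs_pow, abs_of_nonneg M.γ_nonneg]
    apply mul_le_mul_of_nonneg_left _ (pow_nonneg M.γ_nonneg t)
    calc |∑ s, stateDist M π s₀ t s * c s| ≤ ∑ s, |stateDist M π s₀ t s * c s| :=
          Finset.abs_sum_le_sum_abs _ _
      _ ≤ ∑ s, |c s| := by
          apply Finset.sum_le_sum
          intro s _
          rw [abs_mul, abs_of_nonneg (stateDist_nonneg M π hπ s₀ t s)]
          exact mul_le_of_le_one_left (abs_nonneg _) (stateDist_le_one M π hπ s₀ t s)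

lemma V_bellman (M : MDP S A) (π : S → A → ℝ) (hπ : IsPolicy π) (s₀ : S) :
    V M π s₀ = ∑ a, π s₀ a * Q M π s₀ a := by
  set c : S → ℝ := fun s => ∑ a, π s a * M.r s a with hc
  have hsum : ∀ s₁ : S, Summable (fun t : ℕ => M.γ ^ t * ∑ s, stateDist M π s₁ t s * c s) :=
    fun s₁ => summable_V M π hπ c s₁
  have key : V M π s₀ = c s₀ + M.γ * ∑ s₁, (∑ a, π s₀ a * M.P s₀ a s₁) * V M π s₁ := by
    rw [V, Summable.tsum_eq_zero_add (hsum s₀)]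
    congr 1
    · simp [stateDist, c, Finset.sum_ite_eq]
    · have step : ∀ n : ℕ, M.γ ^ (n+1) * ∑ s, stateDist M π s₀ (n+1) s * c s
          = M.γ * ∑ s₁, (∑ a, π s₀ a * M.P s₀ a s₁) * (M.γ ^ n * ∑ s, stateDist M π s₁ n s * c s) := by
        intro n
        rw [pow_succ]
        have : (∑ s, stateDist M π s₀ (n+1) s * c s)
            = ∑ s₁, (∑ a, π s₀ a * M.P s₀ a s₁) * (∑ s, stateDist M π s₁ n s * c s) := by
          have : ∀ s ∈ Finset.univ (α := S), stateDist M π s₀ (n+1) s * c s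
              = ∑ s₁, (∑ a, π s₀ a * M.P s₀ a s₁) * (stateDist M π s₁ n s * c s) := by
            intro s _
            rw [stateDist_succ_eq M π s₀ n s, Finset.sum_mul]
            congr 1; funext s₁; ring
          rw [Finset.sum_congr rfl this, Finset.sum_comm]
          congr 1; funext s₁; rw [Finset.mul_sum]
        rw [this, Finset.mul_sum, Finset.mul_sum]
        congr 1; funext s₁; ring
      rw [tsum_congr step, tsum_mul_left]
      congr 1
      rw [Summable.tsum_finsetSum (f := fun s₁ n => (∑ a, π s₀ a * M.P s₀ a s₁) * (M.γ ^ n * ∑ s, stateDist M π s₁ n s * c s))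
        (fun s₁ _ => (hsum s₁).mul_left _)]
      refine Finset.sum_congr rfl fun s₁ _ => ?_
      rw [tsum_mul_left]
      rfl
  rw [key]
  simp only [Q, hc]
  rw [Finset.mul_sum]
  have : ∀ s₁ ∈ Finset.univ (α := S), M.γ * ((∑ a, π s₀ a * M.P s₀ a s₁) * V M π s₁)
      = ∑ a, π s₀ a * (M.γ * (M.P s₀ a s₁ * V M π s₁)) := by
    intro s₁ _
    rw [Finset.sum_mul, Finset.mul_sum]
    congr 1; funext a; ring
  rw [Finset.sum_congr rfl this, Finset.sum_comm, ← Finset.sum_add_distrib]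
  refine Finset.sum_congr rfl fun a _ => ?_
  rw [show (∑ s₁, π s₀ a * (M.γ * (M.P s₀ a s₁ * V M π s₁)))
      = π s₀ a * (M.γ * ∑ s₁, M.P s₀ a s₁ * V M π s₁) by
    rw [← Finset.mul_sum, ← Finset.mul_sum]]
  ring

end Aux

/-- **Policy improvement.** If `π'` produces a single-step improvement over `π` from every
state (in expectation under `Q^π`), then `π'` is globally at least as good as `π`. -/
theorem policy_improvement
    {S A : Type} [Fintype S] [Fintype A] [Nonempty S] [Nonempty A] [DecidableEq S]
    (M : MDP S A) (π π' : S → A → ℝ)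
    (hπ : IsPolicy π) (hπ' : IsPolicy π')
    (himp : ∀ s : S, ∑ a, π s a * Q M π s a ≤ ∑ a, π' s a * Q M π s a) :
    ∀ s₀ : S, V M π s₀ ≤ V M π' s₀ := by
  -- Pointwise inequality: V π s ≤ ∑ a, π' s a * Q M π s a
  have hle : ∀ s : S, V M π s ≤ ∑ a, π' s a * Q M π s a := by
    intro s
    rw [V_bellman M π hπ s]
    exact himp s
  -- Bellman for π'
  have hbell' : ∀ s : S, V M π' s = ∑ a, π' s a * Q M π' s a :=
    fun s => V_bellman M π' hπ' s
  -- Define D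
  set D : S → ℝ := fun s => V M π' s - V M π s with hD
  have hQ : ∀ s a, Q M π' s a - Q M π s a = M.γ * ∑ s', M.P s a s' * D s' := by
    intro s a
    simp only [Q, hD]
    have : ∑ s', M.P s a s' * (V M π' s' - V M π s')
        = (∑ s', M.P s a s' * V M π' s') - ∑ s', M.P s a s' * V M π s' := by
      rw [← Finset.sum_sub_distrib]
      exact Finset.sum_congr rfl fun s' _ => by ring
    rw [this]; ring
  have hrec : ∀ s : S, M.γ * ∑ a, π' s a * ∑ s', M.P s a s' * D s' ≤ D s := by
    intro s
    have hdiff : ∑ a, π' s a * Q M π' s a - ∑ a, π' s a * Q M π s a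
        = M.γ * ∑ a, π' s a * ∑ s', M.P s a s' * D s' := by
      rw [Finset.mul_sum, ← Finset.sum_sub_distrib]
      refine Finset.sum_congr rfl fun a _ => ?_
      rw [← mul_sub, hQ s a]
      ring
    have h1 := hle s
    have h2 := hbell' s
    simp only [hD]
    linarith [hdiff]
  -- minimum argument
  obtain ⟨sm, _, hmin⟩ := Finset.exists_min_image (Finset.univ : Finset S) D ⟨Classical.arbitrary S, Finset.mem_univ _⟩
  have hmin' : ∀ s : S, D sm ≤ D s := fun s => hmin s (Finset.mem_univ s)
  have hstep : M.γ * D sm ≤ D sm := by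
    calc M.γ * D sm = M.γ * ∑ a, π' sm a * D sm := by
          rw [← Finset.sum_mul, (hπ' sm).2, one_mul]
      _ ≤ M.γ * ∑ a, π' sm a * ∑ s', M.P sm a s' * D s' := by
          apply mul_le_mul_of_nonneg_left _ M.γ_nonneg
          apply Finset.sum_le_sum
          intro a _
          apply mul_le_mul_of_nonneg_left _ ((hπ' sm).1 a)
          calc D sm = ∑ s', M.P sm a s' * D sm := by
                rw [← Finset.sum_mul, M.P_sum_one, one_mul]
            _ ≤ ∑ s', M.P sm a s' * D s' := by
                apply Finset.sum_le_sum
                intro s' _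
                exact mul_le_mul_of_nonneg_left (hmin' s') (M.P_nonneg sm a s')
      _ ≤ D sm := hrec sm
  have hDnn : 0 ≤ D sm := by nlinarith [M.γ_lt_one]
  intro s₀
  have h0 : 0 ≤ D s₀ := le_trans hDnn (hmin' s₀)
  simpa [hD, sub_nonneg] using h0
end

section
/- Performance difference lemma: Let (S, A, P, r, γ) be a finite Markov decision process with discount factor γ ∈ [0,1), and let π and π' be stationary policies. Then for every initial state s₀ ∈ S, V^{π'}(s₀) − V^π(s₀) = (1/(1−γ)) · E_{s∼d^{π'}_{s₀}} E_{a∼π'(·|s)}[A^π(s,a)], where d^{π'}_{s₀} is the discounted state visitation distribution of π' started from s₀. -/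
open scoped BigOperators

variable {S A : Type} [Fintype S] [Fintype A] [DecidableEq S]

section AuxPDL

variable {S A : Type} [Fintype S] [Fintype A] [DecidableEq S]

lemma expect_abs_le {S : Type} [Fintype S] {ρ f : S → ℝ}
    (h0 : ∀ s, 0 ≤ ρ s) (h1 : ∀ s, ρ s ≤ 1) :
    |∑ s, ρ s * f s| ≤ ∑ s, |f s| := by
  calc |∑ s, ρ s * f s| ≤ ∑ s, |ρ s * f s| := Finset.abs_sum_le_sum_abs _ _
    _ ≤ ∑ s, |f s| := by
        apply Finset.sum_le_sum
        intro s _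
        rw [abs_mul, abs_of_nonneg (h0 s)]
        exact mul_le_of_le_one_left (abs_nonneg _) (h1 s)

omit [DecidableEq S] in
lemma summable_geom_mul (M : MDP S A) {c : ℕ → ℝ} {C : ℝ}
    (h : ∀ t, |c t| ≤ C) : Summable (fun t => M.γ ^ t * c t) := by
  apply Summable.of_norm_bounded (g := fun t => M.γ ^ t * C)
    ((summable_geometric_of_lt_one M.γ_nonneg M.γ_lt_one).mul_right C)
  intro t
  rw [norm_mul, norm_pow, Real.norm_eq_abs, abs_of_nonneg M.γ_nonneg, Real.norm_eq_abs]
  exact mul_le_mul_of_nonneg_left (h t) (pow_nonneg M.γ_nonneg t)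

lemma stateDist_shift (M : MDP S A) (π : S → A → ℝ) (hπ : IsPolicy π) (s₀ : S)
    (t : ℕ) (f : S → ℝ) :
    ∑ s, stateDist M π s₀ t s * ∑ a, π s a * ∑ s', M.P s a s' * f s'
      = ∑ s', stateDist M π s₀ (t+1) s' * f s' := by
  calc ∑ s, stateDist M π s₀ t s * ∑ a, π s a * ∑ s', M.P s a s' * f s'
      = ∑ s, ∑ a, ∑ s', stateDist M π s₀ t s * π s a * M.P s a s' * f s' := by
        apply Finset.sum_congr rfl; intro s _
        rw [Finset.mul_sum]
        apply Finset.sum_congr rfl; intro a _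
        rw [show π s a * ∑ s', M.P s a s' * f s' = ∑ s', π s a * (M.P s a s' * f s') from Finset.mul_sum _ _ _,
            Finset.mul_sum]
        apply Finset.sum_congr rfl; intro s' _
        ring
    _ = ∑ s, ∑ s', ∑ a, stateDist M π s₀ t s * π s a * M.P s a s' * f s' :=
        Finset.sum_congr rfl (fun s _ => Finset.sum_comm)
    _ = ∑ s', ∑ s, ∑ a, stateDist M π s₀ t s * π s a * M.P s a s' * f s' :=
        Finset.sum_comm
    _ = ∑ s', stateDist M π s₀ (t+1) s' * f s' := by
        apply Finset.sum_congr rfl; intro s' _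
        simp only [stateDist, Finset.sum_mul]

end AuxPDL

/-- **Performance difference lemma.** -/
theorem performance_difference
    {S A : Type} [Fintype S] [Fintype A] [Nonempty S] [Nonempty A] [DecidableEq S]
    (M : MDP S A) (π π' : S → A → ℝ)
    (hπ : IsPolicy π) (hπ' : IsPolicy π') :
    ∀ s₀ : S,
      V M π' s₀ - V M π s₀ =
        (1 / (1 - M.γ)) * ∑ s, dvisit M π' s₀ s * ∑ a, π' s a * Adv M π s a := by
  intro s₀
  set ρ := stateDist M π' s₀ with hρdef
  set Vf := V M π with hVfdef
  -- basic properties of ρ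
  have hρ0 : ∀ t s, 0 ≤ ρ t s := stateDist_nonneg M π' hπ' s₀
  have hρle : ∀ t s, ρ t s ≤ 1 := fun t s => stateDist_le_one M π' hπ' s₀ t s
  -- the per-state expected advantage
  set g : S → ℝ := fun s => ∑ a, π' s a * Adv M π s a with hgdef
  -- key functions of time
  set W : ℕ → ℝ := fun t => M.γ ^ t * ∑ s, ρ t s * Vf s with hWdef
  set R : ℕ → ℝ := fun t => M.γ ^ t * ∑ s, ρ t s * ∑ a, π' s a * M.r s a with hRdef
  -- summability
  have hsumW : Summable W :=
    summable_geom_mul M (fun t => expect_abs_le (hρ0 t) (hρle t))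
  have hsumR : Summable R :=
    summable_geom_mul M (fun t => expect_abs_le (hρ0 t) (hρle t))
  have hsumW1 : Summable (fun t => W (t + 1)) := (summable_nat_add_iff 1).2 hsumW
  have hsumG : Summable (fun t => M.γ ^ t * ∑ s, ρ t s * g s) :=
    summable_geom_mul M (fun t => expect_abs_le (hρ0 t) (hρle t))
  have hsumpt : ∀ s : S, Summable (fun t => M.γ ^ t * (ρ t s * g s)) := by
    intro s
    apply summable_geom_mul M (C := |g s|)
    intro t
    rw [abs_mul, abs_of_nonneg (hρ0 t s)]
    exact mul_le_of_le_one_left (abs_nonneg _) (hρle t s)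
  -- pointwise identity in s : expected advantage decomposition
  have hg : ∀ s, g s = (∑ a, π' s a * M.r s a)
      + M.γ * (∑ a, π' s a * ∑ s', M.P s a s' * Vf s') - Vf s := by
    intro s
    have : ∀ a, π' s a * Adv M π s a
        = π' s a * M.r s a + M.γ * (π' s a * ∑ s', M.P s a s' * Vf s') - π' s a * Vf s := by
      intro a
      simp only [Adv, Q, hVfdef]
      ring
    rw [hgdef]
    simp only []
    rw [Finset.sum_congr rfl (fun a _ => this a), Finset.sum_sub_distrib, Finset.sum_add_distrib,
        ← Finset.mul_sum, ← Finset.sum_mul, (hπ' s).2, one_mul]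
  -- per-time identity
  have hkey : ∀ t, M.γ ^ t * ∑ s, ρ t s * g s = R t + (W (t + 1) - W t) := by
    intro t
    have expand : ∑ s, ρ t s * g s
        = (∑ s, ρ t s * ∑ a, π' s a * M.r s a)
          + M.γ * (∑ s, ρ t s * ∑ a, π' s a * ∑ s', M.P s a s' * Vf s')
          - ∑ s, ρ t s * Vf s := by
      calc ∑ s, ρ t s * g s
          = ∑ s, (ρ t s * ∑ a, π' s a * M.r s a
              + M.γ * (ρ t s * ∑ a, π' s a * ∑ s', M.P s a s' * Vf s')
              - ρ t s * Vf s) := Finset.sum_congr rfl (fun s _ => by rw [hg s]; ring)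
        _ = _ := by
            rw [Finset.sum_sub_distrib, Finset.sum_add_distrib, ← Finset.mul_sum]
    rw [expand]
    simp only [hρdef]
    rw [stateDist_shift M π' hπ' s₀ t Vf]
    simp only [hRdef, hWdef, hρdef, pow_succ]
    ring
  -- value of W at 0 and sum of R
  have hW0 : W 0 = Vf s₀ := by
    simp only [hWdef, pow_zero, one_mul, hρdef, stateDist]
    simp [Finset.sum_ite_eq']
  have hRsum : (∑' t, R t) = V M π' s₀ := rfl
  have hγne : (1 : ℝ) - M.γ ≠ 0 := by have := M.γ_lt_one; intro h; linarith
  have hdv : ∀ s, dvisit M π' s₀ s * g s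
      = (1 - M.γ) * ∑' t, M.γ ^ t * (ρ t s * g s) := by
    intro s
    rw [dvisit, mul_assoc, ← tsum_mul_right]
    congr 1
    exact tsum_congr (fun t => by rw [hρdef]; ring)
  have hgoal : (1 / (1 - M.γ)) * ∑ s, dvisit M π' s₀ s * g s = V M π' s₀ - Vf s₀ := by
    calc (1 / (1 - M.γ)) * ∑ s, dvisit M π' s₀ s * g s
        = ∑ s, ∑' t, M.γ ^ t * (ρ t s * g s) := by
          rw [Finset.sum_congr rfl (fun s _ => hdv s), ← Finset.mul_sum,
              ← mul_assoc, one_div, inv_mul_cancel₀ hγne, one_mul]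
      _ = ∑' t, ∑ s, M.γ ^ t * (ρ t s * g s) :=
          (Summable.tsum_finsetSum (fun s _ => hsumpt s)).symm
      _ = ∑' t, M.γ ^ t * ∑ s, ρ t s * g s :=
          tsum_congr (fun t => by rw [Finset.mul_sum])
      _ = ∑' t, (R t + (W (t + 1) - W t)) := tsum_congr (fun t => hkey t)
      _ = (∑' t, R t) + ∑' t, (W (t + 1) - W t) := Summable.tsum_add hsumR (hsumW1.sub hsumW)
      _ = (∑' t, R t) + ((∑' t, W (t + 1)) - ∑' t, W t) := by
          rw [Summable.tsum_sub hsumW1 hsumW]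
      _ = (∑' t, R t) - W 0 := by rw [Summable.tsum_eq_zero_add hsumW]; ring
      _ = V M π' s₀ - Vf s₀ := by rw [hRsum, hW0]
  rw [show (∑ s, dvisit M π' s₀ s * ∑ a, π' s a * Adv M π s a)
      = ∑ s, dvisit M π' s₀ s * g s from rfl, hgoal]
end

section
/- Let (S, A, P, r, γ) be a finite Markov decision process with discount factor γ ∈ [0,1), and let π and π' be stationary policies. Then for every initial state s₀ ∈ S, V^{π'}(s₀) − V^π(s₀) = (1/(1−γ)) · E_{s∼d^{π'}_{s₀}}[ E_{a∼π'(·|s)}[Q^π(s,a)] − E_{a∼π(·|s)}[Q^π(s,a)] ], where d^{π'}_{s₀} is the discounted state visitation distribution of π' started from s₀. -/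
open scoped BigOperators

variable {S A : Type} [Fintype S] [Fintype A] [DecidableEq S]

namespace PDL

lemma stateDist_nonneg (M : MDP S A) {π : S → A → ℝ} (hπ : IsPolicy π) (s₀ : S) :
    ∀ t s, 0 ≤ stateDist M π s₀ t s := by
  intro t
  induction t with
  | zero => intro s; simp only [stateDist]; split <;> norm_num
  | succ t ih =>
    intro s'
    apply Finset.sum_nonneg; intro s _
    apply Finset.sum_nonneg; intro a _
    exact mul_nonneg (mul_nonneg (ih s) ((hπ s).1 a)) (M.P_nonneg _ _ _)

lemma stateDist_sum_one (M : MDP S A) {π : S → A → ℝ} (hπ : IsPolicy π) (s₀ : S) :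
    ∀ t, ∑ s, stateDist M π s₀ t s = 1 := by
  intro t
  induction t with
  | zero => simp [stateDist]
  | succ t ih =>
    calc ∑ s', ∑ s, ∑ a, stateDist M π s₀ t s * π s a * M.P s a s'
        = ∑ s, ∑ a, ∑ s', stateDist M π s₀ t s * π s a * M.P s a s' := by
          rw [Finset.sum_comm]
          exact Finset.sum_congr rfl fun s _ => Finset.sum_comm
      _ = ∑ s, ∑ a, stateDist M π s₀ t s * π s a := by
          refine Finset.sum_congr rfl fun s _ => Finset.sum_congr rfl fun a _ => ?_
          rw [← Finset.mul_sum, M.P_sum_one, mul_one]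
      _ = ∑ s, stateDist M π s₀ t s := by
          refine Finset.sum_congr rfl fun s _ => ?_
          rw [← Finset.mul_sum, (hπ s).2, mul_one]
      _ = 1 := ih

lemma stateDist_le_one (M : MDP S A) {π : S → A → ℝ} (hπ : IsPolicy π) (s₀ : S) (t : ℕ) (s : S) :
    stateDist M π s₀ t s ≤ 1 := by
  calc stateDist M π s₀ t s ≤ ∑ s', stateDist M π s₀ t s' :=
        Finset.single_le_sum (fun s' _ => stateDist_nonneg M hπ s₀ t s') (Finset.mem_univ s)
    _ = 1 := stateDist_sum_one M hπ s₀ t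

lemma weight_bound (M : MDP S A) {π : S → A → ℝ} (hπ : IsPolicy π) (s₀ : S) (t : ℕ) (f : S → ℝ) :
    |∑ s, stateDist M π s₀ t s * f s| ≤ ∑ s, |f s| := by
  refine (Finset.abs_sum_le_sum_abs _ _).trans ?_
  apply Finset.sum_le_sum; intro s _
  rw [abs_mul, abs_of_nonneg (stateDist_nonneg M hπ s₀ t s)]
  exact mul_le_of_le_one_left (abs_nonneg _) (stateDist_le_one M hπ s₀ t s)

lemma summable_of_bound (M : MDP S A) {f : ℕ → ℝ} {C : ℝ} (h : ∀ t, |f t| ≤ C * M.γ ^ t) :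
    Summable f := by
  apply Summable.of_abs
  exact Summable.of_nonneg_of_le (fun t => abs_nonneg _) h
    ((summable_geometric_of_lt_one M.γ_nonneg M.γ_lt_one).mul_left C)

lemma summable_geom_weight (M : MDP S A) {π : S → A → ℝ} (hπ : IsPolicy π) (s₀ : S) (f : S → ℝ) :
    Summable (fun t => M.γ ^ t * ∑ s, stateDist M π s₀ t s * f s) := by
  apply summable_of_bound M (C := ∑ s, |f s|)
  intro t
  rw [abs_mul, abs_pow, abs_of_nonneg M.γ_nonneg, mul_comm]
  exact mul_le_mul_of_nonneg_right (weight_bound M hπ s₀ t f) (pow_nonneg M.γ_nonneg t)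

lemma markov (M : MDP S A) (π : S → A → ℝ) (s₀ : S) :
    ∀ t s', stateDist M π s₀ (t + 1) s' =
      ∑ s₁, (∑ a, π s₀ a * M.P s₀ a s₁) * stateDist M π s₁ t s' := by
  intro t
  induction t with
  | zero =>
    intro s'
    simp only [stateDist, ite_mul, one_mul, zero_mul, mul_ite, mul_one, mul_zero,
      Finset.sum_ite_eq, Finset.mem_univ, if_true, Finset.sum_mul]
    rw [Finset.sum_eq_single s₀]
    · simp
    · intro b _ hb; simp [hb]
    · simp
  | succ t ih =>
    intro s'
    show ∑ s, ∑ a, stateDist M π s₀ (t + 1) s * π s a * M.P s a s' = _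
    calc ∑ s, ∑ a, stateDist M π s₀ (t + 1) s * π s a * M.P s a s'
        = ∑ s, ∑ a, ∑ s₁, (∑ b, π s₀ b * M.P s₀ b s₁) *
            (stateDist M π s₁ t s * π s a * M.P s a s') := by
          refine Finset.sum_congr rfl fun s _ => Finset.sum_congr rfl fun a _ => ?_
          rw [ih s, Finset.sum_mul, Finset.sum_mul]
          exact Finset.sum_congr rfl fun s₁ _ => by ring
      _ = ∑ s, ∑ s₁, ∑ a, (∑ b, π s₀ b * M.P s₀ b s₁) *
            (stateDist M π s₁ t s * π s a * M.P s a s') :=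
          Finset.sum_congr rfl fun s _ => Finset.sum_comm
      _ = ∑ s₁, ∑ s, ∑ a, (∑ b, π s₀ b * M.P s₀ b s₁) *
            (stateDist M π s₁ t s * π s a * M.P s a s') := Finset.sum_comm
      _ = ∑ s₁, (∑ b, π s₀ b * M.P s₀ b s₁) *
            ∑ s, ∑ a, stateDist M π s₁ t s * π s a * M.P s a s' := by
          simp_rw [← Finset.mul_sum]
      _ = ∑ s₁, (∑ b, π s₀ b * M.P s₀ b s₁) * stateDist M π s₁ (t + 1) s' := rfl


noncomputable def Rpi (M : MDP S A) (π : S → A → ℝ) (s : S) : ℝ := ∑ a, π s a * M.r s a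

lemma V_eq (M : MDP S A) (π : S → A → ℝ) (s₀ : S) :
    V M π s₀ = ∑' t, M.γ ^ t * ∑ s, stateDist M π s₀ t s * Rpi M π s := rfl

lemma bellman (M : MDP S A) {π : S → A → ℝ} (hπ : IsPolicy π) (s : S) :
    V M π s = ∑ a, π s a * Q M π s a := by
  have hsum : ∀ s', Summable (fun t => M.γ ^ t * ∑ s1, stateDist M π s' t s1 * Rpi M π s1) :=
    fun s' => summable_geom_weight M hπ s' (Rpi M π)
  have key : V M π s = Rpi M π s + M.γ * ∑ s₁, (∑ a, π s a * M.P s a s₁) * V M π s₁ := by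
    rw [V_eq, Summable.tsum_eq_zero_add (hsum s)]
    congr 1
    · simp [stateDist]
    · have step : ∀ t : ℕ, M.γ ^ (t + 1) * ∑ s1, stateDist M π s (t + 1) s1 * Rpi M π s1
          = ∑ s₁, (∑ a, π s a * M.P s a s₁) *
              (M.γ * (M.γ ^ t * ∑ s1, stateDist M π s₁ t s1 * Rpi M π s1)) := by
        intro t
        calc M.γ ^ (t + 1) * ∑ s1, stateDist M π s (t + 1) s1 * Rpi M π s1
            = M.γ ^ (t + 1) * ∑ s1,
                (∑ s₁, (∑ a, π s a * M.P s a s₁) * stateDist M π s₁ t s1) * Rpi M π s1 := by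
              simp_rw [markov M π s t]
          _ = ∑ s₁, (∑ a, π s a * M.P s a s₁) *
              (M.γ * (M.γ ^ t * ∑ s1, stateDist M π s₁ t s1 * Rpi M π s1)) := by
              simp_rw [Finset.sum_mul, Finset.mul_sum]
              rw [Finset.sum_comm]
              refine Finset.sum_congr rfl fun s₁ _ => ?_
              rw [Finset.sum_comm]
              exact Finset.sum_congr rfl fun a _ => Finset.sum_congr rfl fun s1 _ => by ring
      calc (∑' t, M.γ ^ (t + 1) * ∑ s1, stateDist M π s (t + 1) s1 * Rpi M π s1)
          = ∑' t, ∑ s₁, (∑ a, π s a * M.P s a s₁) *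
              (M.γ * (M.γ ^ t * ∑ s1, stateDist M π s₁ t s1 * Rpi M π s1)) := tsum_congr step
        _ = ∑ s₁, ∑' t, (∑ a, π s a * M.P s a s₁) *
              (M.γ * (M.γ ^ t * ∑ s1, stateDist M π s₁ t s1 * Rpi M π s1)) :=
            Summable.tsum_finsetSum fun s₁ _ => (((hsum s₁).mul_left M.γ).mul_left _)
        _ = M.γ * ∑ s₁, (∑ a, π s a * M.P s a s₁) * V M π s₁ := by
            rw [Finset.mul_sum]
            refine Finset.sum_congr rfl fun s₁ _ => ?_
            rw [tsum_mul_left, tsum_mul_left, V_eq]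
            ring
  rw [key]
  simp only [Q, mul_add, Finset.sum_add_distrib, Rpi]
  congr 1
  simp_rw [Finset.sum_mul, Finset.mul_sum]
  rw [Finset.sum_comm]
  exact Finset.sum_congr rfl fun a _ => Finset.sum_congr rfl fun s₁ _ => by ring

lemma pi_Q_expand (M : MDP S A) (π μ : S → A → ℝ) (s : S) :
    ∑ a, μ s a * Q M π s a
      = Rpi M μ s + M.γ * ∑ s', (∑ a, μ s a * M.P s a s') * V M π s' := by
  simp only [Q, mul_add, Finset.sum_add_distrib, Rpi]
  congr 1
  simp_rw [Finset.sum_mul, Finset.mul_sum]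
  rw [Finset.sum_comm]
  exact Finset.sum_congr rfl fun a _ => Finset.sum_congr rfl fun s₁ _ => by ring

lemma step_eq (M : MDP S A) (π : S → A → ℝ) (s₀ : S) (t : ℕ) (s' : S) :
    stateDist M π s₀ (t + 1) s' = ∑ s, stateDist M π s₀ t s * ∑ a, π s a * M.P s a s' := by
  show ∑ s, ∑ a, _ = _
  exact Finset.sum_congr rfl fun s _ => by
    rw [Finset.mul_sum]
    exact Finset.sum_congr rfl fun a _ => (mul_assoc _ _ _)

lemma mid (M : MDP S A) (π' : S → A → ℝ) (s₀ : S) (f : S → ℝ) (t : ℕ) :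
    ∑ s, stateDist M π' s₀ t s * ∑ s', (∑ a, π' s a * M.P s a s') * f s'
      = ∑ s', stateDist M π' s₀ (t + 1) s' * f s' := by
  simp_rw [step_eq, Finset.sum_mul, Finset.mul_sum]
  rw [Finset.sum_comm]
  refine Finset.sum_congr rfl fun s' _ => Finset.sum_congr rfl fun s _ => ?_
  rw [Finset.sum_mul]
  exact Finset.sum_congr rfl fun a _ => by ring

end PDL

set_option maxHeartbeats 1000000 in
/-- **Performance difference lemma, `Q`-difference form.** -/
theorem performance_difference_Q
    {S A : Type} [Fintype S] [Fintype A] [Nonempty S] [Nonempty A] [DecidableEq S]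
    (M : MDP S A) (π π' : S → A → ℝ)
    (hπ : IsPolicy π) (hπ' : IsPolicy π') :
    ∀ s₀ : S,
      V M π' s₀ - V M π s₀ =
        (1 / (1 - M.γ)) *
          ∑ s, dvisit M π' s₀ s *
            ((∑ a, π' s a * Q M π s a) - ∑ a, π s a * Q M π s a) := by
  intro s₀
  have hγ : (1 : ℝ) - M.γ ≠ 0 := by have := M.γ_lt_one; linarith
  have hXs : ∀ s : S, (∑ a, π' s a * Q M π s a) - ∑ a, π s a * Q M π s a
      = PDL.Rpi M π' s + M.γ * (∑ s', (∑ a, π' s a * M.P s a s') * V M π s') - V M π s := by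
    intro s
    rw [PDL.pi_Q_expand M π π' s, ← PDL.bellman M hπ s]
  have hsum1 : Summable (fun t => M.γ ^ t * ∑ s, stateDist M π' s₀ t s * PDL.Rpi M π' s) :=
    PDL.summable_geom_weight M hπ' s₀ _
  have hsum2 : Summable (fun t => M.γ ^ t * ∑ s, stateDist M π' s₀ t s * V M π s) :=
    PDL.summable_geom_weight M hπ' s₀ _
  have hsum2' : Summable (fun t => M.γ ^ (t + 1) * ∑ s, stateDist M π' s₀ (t + 1) s * V M π s) :=
    (summable_nat_add_iff 1).mpr hsum2
  have hsumX : ∀ s : S, Summable (fun t => M.γ ^ t * stateDist M π' s₀ t s *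
      ((∑ a, π' s a * Q M π s a) - ∑ a, π s a * Q M π s a)) := by
    intro s
    apply PDL.summable_of_bound M
      (C := |(∑ a, π' s a * Q M π s a) - ∑ a, π s a * Q M π s a|)
    intro t
    rw [abs_mul, abs_mul, abs_pow, abs_of_nonneg M.γ_nonneg,
      abs_of_nonneg (PDL.stateDist_nonneg M hπ' s₀ t s)]
    have hd1 := PDL.stateDist_le_one M hπ' s₀ t s
    have hd0 := PDL.stateDist_nonneg M hπ' s₀ t s
    nlinarith [mul_nonneg (mul_nonneg (pow_nonneg M.γ_nonneg t) (sub_nonneg.mpr hd1))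
      (abs_nonneg ((∑ a, π' s a * Q M π s a) - ∑ a, π s a * Q M π s a)),
      pow_nonneg M.γ_nonneg t,
      abs_nonneg ((∑ a, π' s a * Q M π s a) - ∑ a, π s a * Q M π s a)]
  have split : (∑' t, ((M.γ ^ t * ∑ s, stateDist M π' s₀ t s * PDL.Rpi M π' s)
        + (M.γ ^ (t + 1) * ∑ s, stateDist M π' s₀ (t + 1) s * V M π s
           - M.γ ^ t * ∑ s, stateDist M π' s₀ t s * V M π s)))
      = V M π' s₀ - V M π s₀ := by
    rw [Summable.tsum_add hsum1 (hsum2'.sub hsum2), Summable.tsum_sub hsum2' hsum2, ← PDL.V_eq]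
    have h0 := Summable.tsum_eq_zero_add hsum2
    have hu0 : M.γ ^ 0 * ∑ s, stateDist M π' s₀ 0 s * V M π s = V M π s₀ := by
      simp [stateDist]
    linarith [h0, hu0]
  have hmid : ∀ t : ℕ, ∑ s, stateDist M π' s₀ t s *
        (M.γ * ∑ s', (∑ a, π' s a * M.P s a s') * V M π s')
      = M.γ * ∑ s', stateDist M π' s₀ (t + 1) s' * V M π s' := by
    intro t
    rw [← PDL.mid M π' s₀ (V M π) t, Finset.mul_sum]
    exact Finset.sum_congr rfl fun s _ => by ring
  have hpoint : ∀ t : ℕ, M.γ ^ t * ∑ s, stateDist M π' s₀ t s *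
        ((∑ a, π' s a * Q M π s a) - ∑ a, π s a * Q M π s a)
      = (M.γ ^ t * ∑ s, stateDist M π' s₀ t s * PDL.Rpi M π' s)
        + (M.γ ^ (t + 1) * ∑ s, stateDist M π' s₀ (t + 1) s * V M π s
           - M.γ ^ t * ∑ s, stateDist M π' s₀ t s * V M π s) := by
    intro t
    have hin : ∑ s, stateDist M π' s₀ t s *
          ((∑ a, π' s a * Q M π s a) - ∑ a, π s a * Q M π s a)
        = (∑ s, stateDist M π' s₀ t s * PDL.Rpi M π' s)
          + M.γ * (∑ s', stateDist M π' s₀ (t + 1) s' * V M π s')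
          - ∑ s, stateDist M π' s₀ t s * V M π s := by
      simp_rw [hXs, mul_sub, mul_add, Finset.sum_sub_distrib, Finset.sum_add_distrib, hmid t]
    rw [hin]; ring
  have hRHS : (1 / (1 - M.γ)) *
        ∑ s, dvisit M π' s₀ s * ((∑ a, π' s a * Q M π s a) - ∑ a, π s a * Q M π s a)
      = ∑' t, M.γ ^ t * ∑ s, stateDist M π' s₀ t s *
          ((∑ a, π' s a * Q M π s a) - ∑ a, π s a * Q M π s a) := by
    simp only [dvisit]
    calc (1 / (1 - M.γ)) * ∑ s, ((1 - M.γ) * ∑' t, M.γ ^ t * stateDist M π' s₀ t s) *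
          ((∑ a, π' s a * Q M π s a) - ∑ a, π s a * Q M π s a)
        = (1 / (1 - M.γ)) * ((1 - M.γ) * ∑ s, (∑' t, M.γ ^ t * stateDist M π' s₀ t s) *
            ((∑ a, π' s a * Q M π s a) - ∑ a, π s a * Q M π s a)) := by
          congr 1
          rw [Finset.mul_sum]
          exact Finset.sum_congr rfl fun s _ => by ring
      _ = ∑ s, (∑' t, M.γ ^ t * stateDist M π' s₀ t s) *
            ((∑ a, π' s a * Q M π s a) - ∑ a, π s a * Q M π s a) := by
          rw [← mul_assoc, one_div, inv_mul_cancel₀ hγ, one_mul]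
      _ = ∑ s, ∑' t, M.γ ^ t * stateDist M π' s₀ t s *
            ((∑ a, π' s a * Q M π s a) - ∑ a, π s a * Q M π s a) :=
          Finset.sum_congr rfl fun s _ => Eq.symm tsum_mul_right
      _ = ∑' t, ∑ s, M.γ ^ t * stateDist M π' s₀ t s *
            ((∑ a, π' s a * Q M π s a) - ∑ a, π s a * Q M π s a) :=
          (Summable.tsum_finsetSum fun s _ => hsumX s).symm
      _ = ∑' t, M.γ ^ t * ∑ s, stateDist M π' s₀ t s *
            ((∑ a, π' s a * Q M π s a) - ∑ a, π s a * Q M π s a) :=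
          tsum_congr fun t => by
            rw [Finset.mul_sum]
            exact Finset.sum_congr rfl fun s _ => (mul_assoc _ _ _)
  rw [hRHS, tsum_congr hpoint, split]
end

section
/- Let (S, A, P, r, γ) be a finite Markov decision process with discount factor γ ∈ [0,1), let π and π' be stationary policies, with π(·|s) absolutely continuous with respect to π'(·|s) for every state s, and let Q̂ : S × A → ℝ satisfy |Q̂(s,a) − Q^π(s,a)| ≤ ε_Q for all (s,a), where ε_Q ≥ 0. Let β > 0, and for each state s define L_s(μ) = E_{a∼μ}[Q̂(s,a)] − β·KL(π(·|s) ‖ μ) for probability distributions μ on A. Fix a state s and δ_s ≥ 0, and suppose L_s(π'(·|s)) ≥ sup_μ L_s(μ) − δ_s. Then E_{a∼π'(·|s)}[Q^π(s,a)] − E_{a∼π(·|s)}[Q^π(s,a)] ≥ β·KL(π(·|s) ‖ π'(·|s)) − δ_s − 2ε_Q. -/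
open scoped BigOperators

variable {S A : Type} [Fintype S] [Fintype A] [DecidableEq S]

/-- Per-state guarantee of approximate KL-regularized policy improvement, `Q`-difference form. -/
theorem kl_regularized_improvement_Q
    {S A : Type} [Fintype S] [Fintype A] [Nonempty S] [Nonempty A] [DecidableEq S]
    (M : MDP S A) (π π' : S → A → ℝ)
    (hπ : IsPolicy π) (hπ' : IsPolicy π')
    (hac : ∀ s : S, AbsCont (π s) (π' s))
    (Qhat : S → A → ℝ) (εQ : ℝ) (hεQ : 0 ≤ εQ)
    (hQ : ∀ s a, |Qhat s a - Q M π s a| ≤ εQ)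
    (β : ℝ) (hβ : 0 < β)
    (s : S) (δs : ℝ) (hδs : 0 ≤ δs)
    (hopt : ∀ μ : A → ℝ, IsProb μ → AbsCont (π s) μ →
      ((∑ a, μ a * Qhat s a) - β * KL (π s) μ) - δs ≤
        (∑ a, π' s a * Qhat s a) - β * KL (π s) (π' s)) :
    β * KL (π s) (π' s) - δs - 2 * εQ ≤
      (∑ a, π' s a * Q M π s a) - ∑ a, π s a * Q M π s a := by
  have hKLself : KL (π s) (π s) = 0 := by
    unfold KL
    apply Finset.sum_eq_zero
    intro a _
    by_cases h : π s a = 0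
    · simp [h]
    · rw [div_self h, Real.log_one, mul_zero]
  have hb : ∀ μ : A → ℝ, IsProb μ →
      |(∑ a, μ a * Qhat s a) - ∑ a, μ a * Q M π s a| ≤ εQ := by
    intro μ ⟨hnn, hsum⟩
    rw [← Finset.sum_sub_distrib]
    calc |∑ a, (μ a * Qhat s a - μ a * Q M π s a)|
        ≤ ∑ a, |μ a * Qhat s a - μ a * Q M π s a| :=
          Finset.abs_sum_le_sum_abs _ _
      _ ≤ ∑ a, μ a * εQ := by
          apply Finset.sum_le_sum
          intro a _
          rw [← mul_sub, abs_mul, abs_of_nonneg (hnn a)]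
          exact mul_le_mul_of_nonneg_left (hQ s a) (hnn a)
      _ = εQ := by rw [← Finset.sum_mul, hsum, one_mul]
  have hself := hopt (π s) (hπ s) (fun a h => h)
  rw [hKLself] at hself
  have h1 := abs_le.mp (hb (π' s) (hπ' s))
  have h2 := abs_le.mp (hb (π s) (hπ s))
  obtain ⟨h1l, h1r⟩ := h1
  obtain ⟨h2l, h2r⟩ := h2
  linarith
end
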